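/- Let P be an n-dimensional convex polytope in ℝⁿ and x a vertex of P. Then for sufficiently small r > 0, the spherical set (radial projection of P ∩ S(x,r) onto S(x,r)) contains no pair of antipodal points of the sphere S(x,r); conversely, if x ∈ P is not a vertex of P, then for all sufficiently small r > 0 this spherical set contains a pair of antipodal points of S(x,r). -/

import Mathlib

open Set Metric

noncomputable section

abbrev Euc (n : ℕ) : Type := EuclideanSpace ℝ (Fin n)

/-- A convex polytope: the convex hull of a finite point set (equivalently, a bounded
intersection of finitely many closed halfspaces). -/
def IsPolytope {n : ℕ} (P : Set (Euc n)) : Prop :=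
  ∃ V : Finset (Euc n), P = convexHull ℝ (V : Set (Euc n))

/-- A tiling of `ℝⁿ` by full-dimensional convex polytopes: the tiles cover `ℝⁿ` and
have pairwise disjoint interiors. -/
def IsTiling {n : ℕ} (𝒯 : Set (Set (Euc n))) : Prop :=
  (∀ T ∈ 𝒯, IsPolytope T ∧ (interior T).Nonempty) ∧
  ⋃₀ 𝒯 = Set.univ ∧
  ∀ T ∈ 𝒯, ∀ T' ∈ 𝒯, T ≠ T' → interior T ∩ interior T' = ∅

/-- A collection of tiles is locally finite if every bounded set meets only finitely
many tiles. -/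
def IsLocallyFinite {n : ℕ} (𝒯 : Set (Set (Euc n))) : Prop :=
  ∀ U : Set (Euc n), Bornology.IsBounded U → {T | T ∈ 𝒯 ∧ (T ∩ U).Nonempty}.Finite

/-! In a convex set `P`, a point `x` fails to be extreme exactly when `P` contains a
nondegenerate segment `[x - v, x + v]` centred at `x`. Scaling `v` to length `r ≤ ‖v‖`
then gives the antipodal pair `x ± (r / ‖v‖) • v` on `S(x, r)`; conversely an antipodal
pair `y, 2x - y` on `S(x, r)` is such a segment with `v = y - x ≠ 0`. -/

theorem IsPolytope.convex {n : ℕ} {P : Set (Euc n)} (hP : IsPolytope P) : Convex ℝ P := by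
  obtain ⟨V, rfl⟩ := hP
  exact convex_convexHull ℝ _

section ExtremePoints

variable {𝕜 E : Type*} [Field 𝕜] [LinearOrder 𝕜] [IsStrictOrderedRing 𝕜]
  [AddCommGroup E] [Module 𝕜 E] {A : Set E} {x : E}

theorem Convex.mem_extremePoints_iff_forall_add_sub_mem (hA : Convex 𝕜 A) (hx : x ∈ A) :
    x ∈ A.extremePoints 𝕜 ↔ ∀ v, x + v ∈ A → x - v ∈ A → v = 0 := by
  refine ⟨fun hext v hadd hsub => ?_, fun h => ⟨hx, fun y hy z hz hxyz => ?_⟩⟩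
  · have := invertibleOfNonzero (two_ne_zero : (2 : 𝕜) ≠ 0)
    have hsub_eq : x - v = x := hext.2 hsub hadd (mem_openSegment_sub_add x v)
    simpa using hsub_eq
  · rw [openSegment_eq_image'] at hxyz
    obtain ⟨θ, ⟨hθ₀, hθ₁⟩, rfl⟩ := hxyz
    -- stepping by `t` either way from parameter `θ` stays inside the segment `[y, z]`
    set t := min θ (1 - θ)
    have ht₀ : 0 ≤ t := le_min hθ₀.le (by linarith)
    have hv : t • (z - y) = 0 := by
      refine h _ ?_ ?_
      · convert hA.add_smul_sub_mem hy hz (t := θ + t)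
          ⟨by linarith, by linarith [min_le_right θ (1 - θ)]⟩ using 1
        module
      · convert hA.add_smul_sub_mem hy hz (t := θ - t)
          ⟨by linarith [min_le_left θ (1 - θ)], by linarith⟩ using 1
        module
    have ht : t ≠ 0 := (lt_min hθ₀ (by linarith)).ne'
    rw [smul_eq_zero_iff_right ht, sub_eq_zero] at hv
    simp [hv]

end ExtremePoints

theorem Convex.add_smul_mem_inter_sphere {E : Type*} [NormedAddCommGroup E] [NormedSpace ℝ E]
    {s : Set E} (hs : Convex ℝ s) {x v : E} (hx : x ∈ s) (hv : x + v ∈ s) {r : ℝ}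
    (hr : 0 < r) (hrv : r ≤ ‖v‖) : x + (r / ‖v‖) • v ∈ s ∩ sphere x r := by
  have hv₀ : 0 < ‖v‖ := hr.trans_le hrv
  refine ⟨hs.add_smul_mem hx hv ⟨by positivity, div_le_one_of_le₀ hrv hv₀.le⟩, ?_⟩
  rw [mem_sphere, dist_eq_norm, add_sub_cancel_left, norm_smul, Real.norm_of_nonneg (by positivity),
    div_mul_cancel₀ r hv₀.ne']

theorem vertex_iff_no_antipodal {n : ℕ} (P : Set (Euc n)) (hP : IsPolytope P)
    (x : Euc n) (hx : x ∈ P) :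
    (x ∈ extremePoints ℝ P →
      ∃ r₀ > 0, ∀ r : ℝ, 0 < r → r < r₀ →
        ¬ ∃ y ∈ P ∩ Metric.sphere x r, (2 : ℝ) • x - y ∈ P ∩ Metric.sphere x r) ∧
    (x ∉ extremePoints ℝ P →
      ∃ r₀ > 0, ∀ r : ℝ, 0 < r → r < r₀ →
        ∃ y ∈ P ∩ Metric.sphere x r, (2 : ℝ) • x - y ∈ P ∩ Metric.sphere x r) := by
  have hext := hP.convex.mem_extremePoints_iff_forall_add_sub_mem hx
  constructor
  · intro hxP
    refine ⟨1, one_pos, fun r hr _ ⟨y, ⟨hy, hyr⟩, hy', _⟩ => ?_⟩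
    have hyx : y - x = 0 :=
      hext.1 hxP _ (by rwa [add_sub_cancel]) (by convert hy' using 1; module)
    rw [sub_eq_zero] at hyx
    rw [hyx, mem_sphere, dist_self] at hyr
    exact hr.ne hyr
  · intro hxP
    obtain ⟨v, hadd, hsub, hv⟩ : ∃ v, x + v ∈ P ∧ x - v ∈ P ∧ v ≠ 0 := by
      simpa [hext] using hxP
    refine ⟨‖v‖, norm_pos_iff.2 hv, fun r hr hrv =>
      ⟨_, hP.convex.add_smul_mem_inter_sphere hx hadd hr hrv.le, ?_⟩⟩
    convert hP.convex.add_smul_mem_inter_sphere hx (v := -v) (by rwa [← sub_eq_add_neg]) hr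
      (by rw [norm_neg]; exact hrv.le) using 1
    rw [norm_neg]
    module
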